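/- arXiv:1407.4372 — 2 statements merged into one kernel-verified Lean document; each statement's English description precedes it below -/
import Mathlib

section
/- Let d ≥ 1, let W be the closed unit ball of ℝ^d and let θ > 0. Let f₀ ∈ ℝ and for every n ≥ 1 let fₙ : Wⁿ → ℝ be the restriction to Wⁿ of a continuously differentiable function on (ℝ^d)ⁿ, symmetric under permutations of its n arguments, satisfying the compatibility conditions f₁(z) = f₀ whenever ‖z‖ = 1 and fₙ₊₁(z₁,…,zₙ,z) = fₙ(z₁,…,zₙ) whenever ‖z‖ = 1, and suppose there is C > 1 such that for all n, ‖fₙ‖_∞ + Σᵢ₌₁ⁿ ‖∇_{xᵢ} fₙ‖_∞ ≤ Cⁿ. Let 𝒱 : ℝ^d → ℝ^d be continuously differentiable. Then both of the following series converge absolutely and are equal: −Σ_{n≥1} (θⁿ/n!) ∫_{Wⁿ} Σᵢ₌₁ⁿ ∇_{zᵢ} fₙ(z₁,…,zₙ)·𝒱(zᵢ) dz₁…dzₙ = Σ_{n≥0} (θⁿ/n!) ∫_{Wⁿ} fₙ(z₁,…,zₙ) [ Σᵢ₌₁ⁿ (div 𝒱)(zᵢ) − θ ∫_W (div 𝒱)(u)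 du ] dz₁…dzₙ (the n = 0 term on the right being f₀ · (−θ ∫_W (div 𝒱)(u) du)). This is the integration-by-parts (duality) formula E[∫_W D_x F · V(x) dx] = E[F δ(V)] of Theorem 3.1 expressed through the form functions of a Poisson functional. -/
open MeasureTheory

noncomputable section

/-- The (weak) divergence of a vector field `V : ℝ^d → ℝ^d`, computed as the trace of its
derivative. -/
def divergence {d : ℕ} (V : EuclideanSpace ℝ (Fin d) → EuclideanSpace ℝ (Fin d))
    (u : EuclideanSpace ℝ (Fin d)) : ℝ :=
  ∑ m : Fin d, fderiv ℝ V u (EuclideanSpace.single m 1) m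

/-- The closed unit ball `W` of `ℝ^d`. -/
def unitBallW (d : ℕ) : Set (EuclideanSpace ℝ (Fin d)) := Metric.closedBall 0 1

/-- The set `Wⁿ ⊆ (ℝ^d)ⁿ`. -/
def unitBallWn (d n : ℕ) : Set (Fin n → EuclideanSpace ℝ (Fin d)) :=
  Set.univ.pi fun _ => unitBallW d

/-- The continuous linear map `v ↦ (0,…,0,v,0,…,0)` (at slot `i`) from `ℝ^d` to `(ℝ^d)ⁿ`. -/
def slot {d n : ℕ} (i : Fin n) :
    EuclideanSpace ℝ (Fin d) →L[ℝ] (Fin n → EuclideanSpace ℝ (Fin d)) :=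
  ContinuousLinearMap.pi (Pi.single i (ContinuousLinearMap.id ℝ (EuclideanSpace ℝ (Fin d))))

/-!
Let `aₙ` and `bₙ` be the `n`-th terms of `∑ θⁿ/n! ∫_{Wⁿ} ∑ᵢ ∇_{zᵢ} fₙ · V(zᵢ)` and
`∑ θⁿ/n! ∫_{Wⁿ} fₙ ∑ᵢ div V(zᵢ)`. For `n = k + 1`, symmetry of `fₙ` makes every `i` contribute to
`aₙ + bₙ` as much as `i = n`, and integrating that contribution in `zₙ` first is the divergence
theorem on the unit ball for the field `fₙ(z₁, …, zₖ, ·) V`, whose coefficient equals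
`fₖ(z₁, …, zₖ)` on the sphere by compatibility. Hence `a_{k+1} + b_{k+1}` is `θ ∫_W div V` times the
`k`-th term of `∑ θᵏ/k! ∫_{Wᵏ} fₖ`, `a₀ = b₀ = 0`, and the identity is an index shift. The divergence
theorem on the ball reduces, one coordinate at a time, to Fubini and the fundamental theorem of
calculus on the chords of the ball, at whose ends the field vanishes.
-/

local notation "ℝ^" d:max => EuclideanSpace ℝ (Fin d)

lemma setIntegral_sq_le_eq_zero_of_hasDerivAt {φ φ' : ℝ → ℝ} (hφ : ∀ t, HasDerivAt φ (φ' t) t)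
    (hφ' : Continuous φ') {r : ℝ} (h0 : ∀ t, t ^ 2 = r → φ t = 0) :
    ∫ t in {t : ℝ | t ^ 2 ≤ r}, φ' t = 0 := by
  rcases lt_or_ge r 0 with hr | hr
  · have hempty : {t : ℝ | t ^ 2 ≤ r} = ∅ :=
      Set.eq_empty_of_forall_notMem fun t ht => (hr.trans_le (sq_nonneg t)).not_ge ht
    simp [hempty]
  have hset : {t : ℝ | t ^ 2 ≤ r} = Set.Icc (-√r) √r := Set.ext fun t => Real.sq_le hr
  have hs : -√r ≤ √r := neg_le_self (Real.sqrt_nonneg r)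
  rw [hset, integral_Icc_eq_integral_Ioc, ← intervalIntegral.integral_of_le hs,
    intervalIntegral.integral_eq_sub_of_hasDerivAt (fun t _ => hφ t) (hφ'.intervalIntegrable _ _),
    h0 _ (Real.sq_sqrt hr), h0 _ (by rw [neg_sq, Real.sq_sqrt hr]), sub_self]

/-- Cartesian coordinates on `ℝ^(k+1)` that single out the `m`-th coordinate. -/
def insertCoord {k : ℕ} (m : Fin (k + 1)) : (ℝ × (Fin k → ℝ)) ≃ᵐ ℝ^(k + 1) :=
  (MeasurableEquiv.piFinSuccAbove (fun _ => ℝ) m).symm.trans (MeasurableEquiv.toLp 2 _)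

section insertCoord

variable {k : ℕ} (m : Fin (k + 1))

lemma insertCoord_apply (t : ℝ) (y : Fin k → ℝ) :
    insertCoord m (t, y) = WithLp.toLp 2 (Fin.insertNth m t y) := rfl

lemma measurePreserving_insertCoord : MeasurePreserving (insertCoord m) :=
  (volume_preserving_piFinSuccAbove (fun _ => ℝ) m).symm.trans (PiLp.volume_preserving_toLp _)

lemma norm_insertCoord_sq (t : ℝ) (y : Fin k → ℝ) :
    ‖insertCoord m (t, y)‖ ^ 2 = t ^ 2 + ∑ j, y j ^ 2 := by
  rw [EuclideanSpace.real_norm_sq_eq, Fin.sum_univ_succAbove _ m]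
  simp [insertCoord_apply]

lemma hasDerivAt_insertCoord (t : ℝ) (y : Fin k → ℝ) :
    HasDerivAt (fun t => insertCoord m (t, y)) (EuclideanSpace.single m 1) t := by
  have h : (fun t => insertCoord m (t, y)) =
      fun t => insertCoord m (0, y) + t • EuclideanSpace.single m 1 := by
    ext t j
    refine m.succAboveCases ?_ (fun j => ?_) j <;> simp [insertCoord_apply, Fin.succAbove_ne]
  rw [h]
  simpa using ((hasDerivAt_id t).smul_const (EuclideanSpace.single m (1 : ℝ))).const_add
    (insertCoord m (0, y))

lemma insertCoord_mem_closedBall_iff (t : ℝ) (y : Fin k → ℝ) :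
    insertCoord m (t, y) ∈ Metric.closedBall 0 1 ↔ t ^ 2 ≤ 1 - ∑ j, y j ^ 2 := by
  rw [mem_closedBall_zero_iff, ← sq_le_one_iff₀ (norm_nonneg _), norm_insertCoord_sq,
    le_sub_iff_add_le]

lemma norm_insertCoord_eq_one {t : ℝ} {y : Fin k → ℝ} (h : t ^ 2 = 1 - ∑ j, y j ^ 2) :
    ‖insertCoord m (t, y)‖ = 1 := by
  refine (pow_eq_one_iff_of_nonneg (norm_nonneg _) two_ne_zero).mp ?_
  rw [norm_insertCoord_sq, h, sub_add_cancel]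

lemma continuous_insertCoord : Continuous (insertCoord m) :=
  (PiLp.continuous_toLp 2 _).comp
    (Continuous.finInsertNth (A := fun _ => ℝ) m continuous_fst continuous_snd)

end insertCoord

theorem setIntegral_closedBall_fderiv_single_eq_zero {d : ℕ} {h : ℝ^d → ℝ} (hh : ContDiff ℝ 1 h)
    (h0 : ∀ v : ℝ^d, ‖v‖ = 1 → h v = 0) (m : Fin d) :
    ∫ v in Metric.closedBall (0 : ℝ^d) 1, fderiv ℝ h v (EuclideanSpace.single m 1) = 0 := by
  obtain ⟨k, rfl⟩ : ∃ k, d = k + 1 := Nat.exists_eq_succ_of_ne_zero m.pos.ne'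
  set B := Metric.closedBall (0 : ℝ^(k + 1)) 1
  set F := fun v => fderiv ℝ h v (EuclideanSpace.single m 1)
  set e := insertCoord m
  have hF : Continuous F := (hh.continuous_fderiv one_ne_zero).clm_apply continuous_const
  -- the chord of the ball through `y` in the direction of the `m`-th axis
  have hline : ∀ y, ∫ t, (e ⁻¹' B).indicator (F ∘ e) (t, y) = 0 := fun y => by
    have hslice : (fun t => (e ⁻¹' B).indicator (F ∘ e) (t, y)) =
        {t : ℝ | t ^ 2 ≤ 1 - ∑ j, y j ^ 2}.indicator fun t => F (e (t, y)) := by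
      ext t
      classical
      simp only [Set.indicator_apply, Set.mem_preimage, e, B, insertCoord_mem_closedBall_iff,
        Set.mem_ofPred_eq, Function.comp_apply]
    rw [hslice, integral_indicator (measurableSet_le (by fun_prop) measurable_const)]
    refine setIntegral_sq_le_eq_zero_of_hasDerivAt (fun t => ?_)
      (hF.comp ((continuous_insertCoord m).comp (Continuous.prodMk_left y)))
      fun t ht => h0 _ (norm_insertCoord_eq_one m ht)
    exact (hh.differentiable one_ne_zero _).hasFDerivAt.comp_hasDerivAt t
      (hasDerivAt_insertCoord m t y)
  have hB : MeasurableSet (e ⁻¹' B) := measurableSet_closedBall.preimage e.measurable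
  have hint : IntegrableOn (F ∘ e) (e ⁻¹' B) :=
    ((measurePreserving_insertCoord m).integrableOn_comp_preimage e.measurableEmbedding).mpr
      (hF.continuousOn.integrableOn_compact (isCompact_closedBall 0 1))
  calc ∫ v in B, F v = ∫ p in e ⁻¹' B, F (e p) :=
        ((measurePreserving_insertCoord m).setIntegral_preimage_emb e.measurableEmbedding F B).symm
    _ = ∫ p, (e ⁻¹' B).indicator (F ∘ e) p := (integral_indicator hB).symm
    _ = ∫ y, ∫ t, (e ⁻¹' B).indicator (F ∘ e) (t, y) := by
        rw [Measure.volume_eq_prod]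
        exact integral_prod_symm _ ((integrable_indicator_iff hB).mpr hint)
    _ = 0 := by simp only [hline, integral_zero]

section Divergence

variable {d : ℕ}

lemma continuous_divergence {V : ℝ^d → ℝ^d} (hV : ContDiff ℝ 1 V) :
    Continuous (divergence V) :=
  continuous_finsetSum _ fun m _ => (EuclideanSpace.proj m).continuous.comp
    ((hV.continuous_fderiv one_ne_zero).clm_apply continuous_const)

lemma fderiv_apply_add_mul_divergence {g : ℝ^d → ℝ} {V : ℝ^d → ℝ^d} {v : ℝ^d}
    (hg : DifferentiableAt ℝ g v) (hV : DifferentiableAt ℝ V v) :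
    fderiv ℝ g v (V v) + g v * divergence V v =
      ∑ m, fderiv ℝ (fun w => g w * V w m) v (EuclideanSpace.single m 1) := by
  have hprod : ∀ m, HasFDerivAt (fun w => g w * V w m)
      (g v • (EuclideanSpace.proj (𝕜 := ℝ) m).comp (fderiv ℝ V v) + V v m • fderiv ℝ g v) v :=
    fun m => hg.hasFDerivAt.mul ((EuclideanSpace.proj (𝕜 := ℝ) m).hasFDerivAt.comp v hV.hasFDerivAt)
  have hexpand : fderiv ℝ g v (V v) = ∑ m, V v m * fderiv ℝ g v (EuclideanSpace.single m 1) := by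
    conv_lhs => rw [← (EuclideanSpace.basisFun (Fin d) ℝ).sum_repr (V v)]
    simp [map_sum]
  simp only [(hprod _).fderiv, add_apply, smul_apply,
    ContinuousLinearMap.comp_apply, PiLp.proj_apply, smul_eq_mul, Finset.sum_add_distrib,
    ← Finset.mul_sum, hexpand, divergence]
  ring

/-- The divergence theorem on the unit ball for the field `g V`, with `g` constant on the sphere. -/
theorem setIntegral_closedBall_fderiv_add_mul_divergence {g : ℝ^d → ℝ} (hg : ContDiff ℝ 1 g)
    {c : ℝ} (hgc : ∀ v : ℝ^d, ‖v‖ = 1 → g v = c) {V : ℝ^d → ℝ^d} (hV : ContDiff ℝ 1 V) :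
    ∫ v in Metric.closedBall (0 : ℝ^d) 1, (fderiv ℝ g v (V v) + g v * divergence V v) =
      c * ∫ v in Metric.closedBall (0 : ℝ^d) 1, divergence V v := by
  set B := Metric.closedBall (0 : ℝ^d) 1
  have hB : IsCompact B := isCompact_closedBall 0 1
  have hcomp : ∀ m, ContDiff ℝ 1 fun w => (g w - c) * V w m := fun m =>
    (hg.sub contDiff_const).mul ((EuclideanSpace.proj (𝕜 := ℝ) m).contDiff.comp hV)
  have hzero : ∫ v in B, (fderiv ℝ g v (V v) + (g v - c) * divergence V v) = 0 := by
    have hsum : ∀ v, fderiv ℝ g v (V v) + (g v - c) * divergence V v =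
        ∑ m, fderiv ℝ (fun w => (g w - c) * V w m) v (EuclideanSpace.single m 1) := fun v => by
      rw [← fderiv_sub_const c]
      exact fderiv_apply_add_mul_divergence
        ((hg.sub contDiff_const).differentiable one_ne_zero v) (hV.differentiable one_ne_zero v)
    simp_rw [hsum]
    rw [integral_finsetSum _ fun m _ => (((hcomp m).continuous_fderiv one_ne_zero).clm_apply
      continuous_const).continuousOn.integrableOn_compact hB]
    exact Finset.sum_eq_zero fun m _ => setIntegral_closedBall_fderiv_single_eq_zero (hcomp m)
      (fun v hv => by simp [hgc v hv]) m
  have hcont : Continuous fun v => fderiv ℝ g v (V v) + (g v - c) * divergence V v :=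
    ((hg.continuous_fderiv one_ne_zero).clm_apply hV.continuous).add
      ((hg.continuous.sub continuous_const).mul (continuous_divergence hV))
  simp_rw [show ∀ v, fderiv ℝ g v (V v) + g v * divergence V v =
      (fderiv ℝ g v (V v) + (g v - c) * divergence V v) + c * divergence V v from fun v => by ring]
  have hint : IntegrableOn (fun v => c * divergence V v) B :=
    (continuous_const.mul (continuous_divergence hV)).continuousOn.integrableOn_compact hB
  rw [integral_add (hcont.continuousOn.integrableOn_compact hB) hint, hzero, zero_add,
    integral_const_mul]

end Divergence

section Symmetric

variable {𝕜 E F : Type*} [NontriviallyNormedField 𝕜] [NormedAddCommGroup E] [NormedSpace 𝕜 E]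
  [NormedAddCommGroup F] [NormedSpace 𝕜 F]

lemma fderiv_comp_perm_apply {n : ℕ} {f : (Fin n → E) → F} {σ : Equiv.Perm (Fin n)}
    (hf : ∀ z, f (z ∘ σ) = f z) (z w : Fin n → E) :
    fderiv 𝕜 f (z ∘ σ) (w ∘ σ) = fderiv 𝕜 f z w := by
  set P := ContinuousLinearEquiv.piCongrLeft 𝕜 (fun _ : Fin n => E) σ.symm
  have hP : ∀ z, P z = z ∘ σ := fun z => funext fun j => by
    show Equiv.piCongrLeft (fun _ => E) σ.symm z j = _
    simpa using Equiv.piCongrLeft_apply_apply (fun _ => E) σ.symm z (σ j)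
  have hfP : f ∘ P = f := funext fun z => by simp [hP, hf]
  have h := P.comp_right_fderiv (f := f) (x := z)
  rw [hfP] at h
  simp [h, hP]

end Symmetric

section UnitBallWn

variable {d : ℕ}

lemma isCompact_unitBallWn (n : ℕ) : IsCompact (unitBallWn d n) :=
  isCompact_univ_pi fun _ => isCompact_closedBall _ _

lemma Continuous.integrableOn_unitBallWn {n : ℕ} {F : (Fin n → ℝ^d) → ℝ} (hF : Continuous F) :
    IntegrableOn F (unitBallWn d n) :=
  hF.continuousOn.integrableOn_compact (isCompact_unitBallWn n)

lemma setIntegral_unitBallWn_comp_perm {n : ℕ} (σ : Equiv.Perm (Fin n))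
    (F : (Fin n → ℝ^d) → ℝ) :
    ∫ z in unitBallWn d n, F (z ∘ σ) = ∫ z in unitBallWn d n, F z := by
  set e := MeasurableEquiv.piCongrLeft (fun _ : Fin n => ℝ^d) σ.symm
  have he : ∀ z, e z = z ∘ σ := fun z => funext fun j => by
    show Equiv.piCongrLeft (fun _ => ℝ^d) σ.symm z j = _
    simpa using Equiv.piCongrLeft_apply_apply (fun _ => ℝ^d) σ.symm z (σ j)
  have hpre : e ⁻¹' unitBallWn d n = unitBallWn d n := by
    ext z
    simp only [Set.mem_preimage, he, unitBallWn, Set.mem_univ_pi, Function.comp_apply]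
    exact ⟨fun h i => by simpa using h (σ.symm i), fun h i => h (σ i)⟩
  have h : ∫ z in e ⁻¹' unitBallWn d n, F (e z) = ∫ z in unitBallWn d n, F z :=
    (volume_measurePreserving_piCongrLeft (fun _ : Fin n => ℝ^d)
      σ.symm).setIntegral_preimage_emb e.measurableEmbedding F (unitBallWn d n)
  simpa only [hpre, he] using h

lemma snoc_mem_unitBallWn_iff {k : ℕ} (w : Fin k → ℝ^d) (v : ℝ^d) :
    (Fin.snoc w v : Fin (k + 1) → ℝ^d) ∈ unitBallWn d (k + 1) ↔
      v ∈ unitBallW d ∧ w ∈ unitBallWn d k := by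
  simp only [unitBallWn, Set.mem_univ_pi, Fin.forall_fin_succ', Fin.snoc_castSucc, Fin.snoc_last]
  exact and_comm

lemma setIntegral_unitBallWn_succ {k : ℕ} {F : (Fin (k + 1) → ℝ^d) → ℝ}
    (hF : IntegrableOn F (unitBallWn d (k + 1))) :
    ∫ z in unitBallWn d (k + 1), F z =
      ∫ w in unitBallWn d k, ∫ v in unitBallW d, F (Fin.snoc w v) := by
  set e := (MeasurableEquiv.piFinSuccAbove (fun _ => ℝ^d) (Fin.last k)).symm
  have he : ∀ p, e p = Fin.snoc p.2 p.1 := fun p => Fin.insertNth_last' p.1 p.2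
  have hmp : MeasurePreserving e := (volume_preserving_piFinSuccAbove _ _).symm
  have hpre : e ⁻¹' unitBallWn d (k + 1) = unitBallW d ×ˢ unitBallWn d k := by
    ext ⟨v, w⟩
    simp only [Set.mem_preimage, he, snoc_mem_unitBallWn_iff, Set.mem_prod]
  have hint := (hmp.integrableOn_comp_preimage e.measurableEmbedding).mpr hF
  rw [hpre, IntegrableOn, Measure.volume_eq_prod, ← Measure.prod_restrict] at hint
  rw [← hmp.setIntegral_preimage_emb e.measurableEmbedding, hpre, Measure.volume_eq_prod,
    ← Measure.prod_restrict]
  simpa only [Function.comp_apply, he] using integral_prod_symm _ hint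

lemma abs_setIntegral_unitBallWn_le {n : ℕ} {F : (Fin n → ℝ^d) → ℝ} {M : ℝ}
    (hF : ∀ z ∈ unitBallWn d n, |F z| ≤ M) :
    |∫ z in unitBallWn d n, F z| ≤ M * volume.real (unitBallW d) ^ n := by
  have hvol : volume (unitBallWn d n) = volume (unitBallW d) ^ n := by
    simp [unitBallWn, volume_pi_pi]
  have hfin : volume (unitBallWn d n) < ⊤ := by
    rw [hvol]
    exact ENNReal.pow_lt_top measure_closedBall_lt_top
  simpa [measureReal_def, hvol] using
    norm_setIntegral_le_of_norm_le_const hfin fun z hz => (Real.norm_eq_abs _).trans_le (hF z hz)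

end UnitBallWn

section FormFunctions

variable {d : ℕ}

lemma slot_apply {n : ℕ} (i : Fin n) (v : ℝ^d) : slot i v = Pi.single i v := by
  ext j : 1
  rcases eq_or_ne j i with rfl | h <;> simp [slot, *]

lemma continuous_fderiv_apply_single {n : ℕ} {f : (Fin n → ℝ^d) → ℝ} (hf : ContDiff ℝ 1 f)
    {V : ℝ^d → ℝ^d} (hV : Continuous V) (i : Fin n) :
    Continuous fun z => fderiv ℝ f z (Pi.single i (V (z i))) := by
  simp_rw [← slot_apply]
  exact (hf.continuous_fderiv one_ne_zero).clm_apply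
    ((slot i).continuous.comp (hV.comp (continuous_apply i)))

lemma continuous_sum_fderiv_apply_single {n : ℕ} {f : (Fin n → ℝ^d) → ℝ}
    (hf : ContDiff ℝ 1 f) {V : ℝ^d → ℝ^d} (hV : Continuous V) :
    Continuous fun z => ∑ i, fderiv ℝ f z (Pi.single i (V (z i))) :=
  continuous_finsetSum _ fun i _ => continuous_fderiv_apply_single hf hV i

lemma continuous_mul_sum_divergence {n : ℕ} {f : (Fin n → ℝ^d) → ℝ} (hf : Continuous f)
    {V : ℝ^d → ℝ^d} (hV : ContDiff ℝ 1 V) :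
    Continuous fun z => f z * ∑ i, divergence V (z i) :=
  hf.mul (continuous_finsetSum _ fun i _ => (continuous_divergence hV).comp (continuous_apply i))

lemma continuous_fderiv_single_add_mul_divergence {n : ℕ} {f : (Fin n → ℝ^d) → ℝ}
    (hf : ContDiff ℝ 1 f) {V : ℝ^d → ℝ^d} (hV : ContDiff ℝ 1 V) (i : Fin n) :
    Continuous fun z => fderiv ℝ f z (Pi.single i (V (z i))) + f z * divergence V (z i) :=
  (continuous_fderiv_apply_single hf hV.continuous i).add
    (hf.continuous.mul ((continuous_divergence hV).comp (continuous_apply i)))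

lemma setIntegral_fderiv_single_add_mul_divergence_eq {n : ℕ} {f : (Fin n → ℝ^d) → ℝ}
    (hf : ∀ (σ : Equiv.Perm (Fin n)) z, f (z ∘ σ) = f z) (V : ℝ^d → ℝ^d) (i j : Fin n) :
    ∫ z in unitBallWn d n, (fderiv ℝ f z (Pi.single i (V (z i))) + f z * divergence V (z i)) =
      ∫ z in unitBallWn d n, (fderiv ℝ f z (Pi.single j (V (z j))) + f z * divergence V (z j)) := by
  classical
  set σ := Equiv.swap i j
  rw [← setIntegral_unitBallWn_comp_perm σ]
  congr 1 with z
  have hsingle : (Pi.single i (V (z j)) : Fin n → ℝ^d) = Pi.single j (V (z j)) ∘ σ := by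
    rw [Pi.single_comp_equiv, Equiv.symm_swap, Equiv.swap_apply_right]
  simp only [Function.comp_apply, σ, Equiv.swap_apply_left, hf, hsingle,
    fderiv_comp_perm_apply (hf _)]

lemma snoc_eq_update_snoc {α : Type*} {k : ℕ} (w : Fin k → α) (a : α) :
    (fun v => (Fin.snoc w v : Fin (k + 1) → α)) =
      Function.update (Fin.snoc w a : Fin (k + 1) → α) (Fin.last k) :=
  funext fun v => by rw [Fin.update_snoc_last]

lemma contDiff_snoc {k : ℕ} {N : WithTop ℕ∞} (w : Fin k → ℝ^d) :
    ContDiff ℝ N fun v : ℝ^d => (Fin.snoc w v : Fin (k + 1) → ℝ^d) := by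
  rw [snoc_eq_update_snoc w 0]
  exact contDiff_update N _ _

lemma hasFDerivAt_snoc {k : ℕ} (w : Fin k → ℝ^d) (v : ℝ^d) :
    HasFDerivAt (fun v : ℝ^d => (Fin.snoc w v : Fin (k + 1) → ℝ^d)) (slot (Fin.last k)) v := by
  rw [snoc_eq_update_snoc w 0]
  exact hasFDerivAt_update (𝕜 := ℝ) (Fin.snoc w 0 : Fin (k + 1) → ℝ^d) v

lemma setIntegral_fderiv_single_last_add_mul_divergence {k : ℕ}
    {f : (Fin (k + 1) → ℝ^d) → ℝ} (hf : ContDiff ℝ 1 f) {g : (Fin k → ℝ^d) → ℝ}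
    (hfg : ∀ w v, ‖v‖ = 1 → f (Fin.snoc w v) = g w) {V : ℝ^d → ℝ^d} (hV : ContDiff ℝ 1 V) :
    ∫ z in unitBallWn d (k + 1), (fderiv ℝ f z (Pi.single (Fin.last k) (V (z (Fin.last k)))) +
        f z * divergence V (z (Fin.last k))) =
      (∫ u in unitBallW d, divergence V u) * ∫ w in unitBallWn d k, g w := by
  rw [setIntegral_unitBallWn_succ
    (continuous_fderiv_single_add_mul_divergence hf hV _).integrableOn_unitBallWn, mul_comm,
    ← integral_mul_const]
  congr 1 with w
  have hfderiv : ∀ v, fderiv ℝ (f ∘ fun v => Fin.snoc w v) v =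
      (fderiv ℝ f (Fin.snoc w v)).comp (slot (Fin.last k)) := fun v =>
    ((hf.differentiable one_ne_zero _).hasFDerivAt.comp v (hasFDerivAt_snoc w v)).fderiv
  have h := setIntegral_closedBall_fderiv_add_mul_divergence (hf.comp (contDiff_snoc w)) (hfg w) hV
  simp only [hfderiv, ContinuousLinearMap.comp_apply, Function.comp_apply, slot_apply] at h
  simpa [Fin.snoc_last, unitBallW] using h

lemma setIntegral_mul_sum_divergence_sub {n : ℕ} {f : (Fin n → ℝ^d) → ℝ} (hf : Continuous f)
    {V : ℝ^d → ℝ^d} (hV : ContDiff ℝ 1 V) (c : ℝ) :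
    ∫ z in unitBallWn d n, f z * ((∑ i, divergence V (z i)) - c) =
      (∫ z in unitBallWn d n, f z * ∑ i, divergence V (z i)) - c * ∫ z in unitBallWn d n, f z := by
  simp_rw [mul_sub]
  rw [integral_sub (g := fun z => f z * c)
    (continuous_mul_sum_divergence hf hV).integrableOn_unitBallWn
    (hf.mul continuous_const).integrableOn_unitBallWn, integral_mul_const, mul_comm]

theorem setIntegral_sum_fderiv_add_setIntegral_mul_sum_divergence {k : ℕ}
    {f : (Fin (k + 1) → ℝ^d) → ℝ} (hf : ContDiff ℝ 1 f)
    (hsym : ∀ (σ : Equiv.Perm (Fin (k + 1))) z, f (z ∘ σ) = f z) {g : (Fin k → ℝ^d) → ℝ}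
    (hfg : ∀ w v, ‖v‖ = 1 → f (Fin.snoc w v) = g w) {V : ℝ^d → ℝ^d} (hV : ContDiff ℝ 1 V) :
    (∫ z in unitBallWn d (k + 1), ∑ i, fderiv ℝ f z (Pi.single i (V (z i)))) +
        ∫ z in unitBallWn d (k + 1), f z * ∑ i, divergence V (z i) =
      (k + 1) * ((∫ u in unitBallW d, divergence V u) * ∫ w in unitBallWn d k, g w) := by
  rw [← integral_add (continuous_sum_fderiv_apply_single hf hV.continuous).integrableOn_unitBallWn
    (continuous_mul_sum_divergence hf.continuous hV).integrableOn_unitBallWn]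
  simp_rw [Finset.mul_sum, ← Finset.sum_add_distrib]
  rw [integral_finsetSum _ fun i _ =>
    (continuous_fderiv_single_add_mul_divergence hf hV i).integrableOn_unitBallWn]
  simp_rw [setIntegral_fderiv_single_add_mul_divergence_eq hsym V _ (Fin.last k),
    setIntegral_fderiv_single_last_add_mul_divergence hf hfg hV]
  simp

end FormFunctions

section Series

lemma summable_pow_div_factorial_mul_of_abs_le (x : ℝ) {a : ℕ → ℝ} {K ρ : ℝ}
    (h : ∀ n, |a n| ≤ K * ρ ^ n) : Summable fun n => x ^ n / n.factorial * a n := by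
  refine ((Real.summable_pow_div_factorial (|x| * ρ)).mul_left K).of_norm_bounded fun n => ?_
  rw [Real.norm_eq_abs, abs_mul, abs_div, abs_pow, Nat.abs_cast]
  calc |x| ^ n / n.factorial * |a n| ≤ |x| ^ n / n.factorial * (K * ρ ^ n) := by gcongr; exact h n
    _ = K * ((|x| * ρ) ^ n / n.factorial) := by ring

lemma neg_tsum_eq_tsum_sub {a b c : ℕ → ℝ} (ha : Summable a) (hb : Summable b)
    (h0 : a 0 + b 0 = 0) (hsucc : ∀ n, a (n + 1) + b (n + 1) = c n) :
    -∑' n, a n = ∑' n, (b n - c n) := by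
  have hc : Summable c := by
    simpa only [hsucc] using (summable_nat_add_iff 1).mpr (ha.add hb)
  have h := (ha.add hb).tsum_eq_zero_add
  simp only [hsucc, h0, zero_add] at h
  rw [hb.tsum_sub hc, ← h, ha.tsum_add hb]
  ring

end Series

section FormFunctionBounds

variable {d : ℕ} {f : (n : ℕ) → (Fin n → ℝ^d) → ℝ} {C : ℝ}

lemma abs_sum_apply_single_le {n : ℕ} (L : (Fin n → ℝ^d) →L[ℝ] ℝ) {u : Fin n → ℝ^d} {M : ℝ}
    (hM : ∀ i, ‖u i‖ ≤ M) : |∑ i, L (Pi.single i (u i))| ≤ (∑ i, ‖L.comp (slot i)‖) * M := by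
  rw [Finset.sum_mul]
  refine (Finset.abs_sum_le_sum_abs _ _).trans (Finset.sum_le_sum fun i _ => ?_)
  rw [← slot_apply, ← ContinuousLinearMap.comp_apply, ← Real.norm_eq_abs]
  exact (L.comp (slot i)).le_opNorm_of_le (hM i)

variable (hbound : ∀ (n : ℕ) (z : Fin n → ℝ^d), z ∈ unitBallWn d n →
  |f n z| + ∑ i : Fin n, ‖(fderiv ℝ (f n) z).comp (slot i)‖ ≤ C ^ n)
include hbound

lemma summable_setIntegral (θ : ℝ) :
    Summable fun n => θ ^ n / n.factorial * ∫ z in unitBallWn d n, f n z := by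
  refine summable_pow_div_factorial_mul_of_abs_le θ (K := 1)
    (ρ := |C| * volume.real (unitBallW d)) fun n => ?_
  refine (abs_setIntegral_unitBallWn_le (M := |C| ^ n) fun z hz => ?_).trans_eq (by ring)
  calc |f n z| ≤ C ^ n := (le_add_of_nonneg_right (by positivity)).trans (hbound n z hz)
    _ ≤ |C| ^ n := (le_abs_self _).trans_eq (abs_pow C n)

lemma summable_setIntegral_sum_fderiv (θ : ℝ) {V : ℝ^d → ℝ^d} (hV : Continuous V) :
    Summable fun n => θ ^ n / n.factorial *
      ∫ z in unitBallWn d n, ∑ i, fderiv ℝ (f n) z (Pi.single i (V (z i))) := by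
  obtain ⟨M, hM⟩ := (isCompact_closedBall (0 : ℝ^d) 1).exists_bound_of_continuousOn
    hV.continuousOn
  have hM0 : 0 ≤ M := (norm_nonneg _).trans (hM 0 (Metric.mem_closedBall_self zero_le_one))
  refine summable_pow_div_factorial_mul_of_abs_le θ (K := M)
    (ρ := |C| * volume.real (unitBallW d)) fun n => ?_
  refine (abs_setIntegral_unitBallWn_le (M := |C| ^ n * M) fun z hz => ?_).trans_eq (by ring)
  refine (abs_sum_apply_single_le _ fun i => hM _ (hz i trivial)).trans ?_
  gcongr
  calc ∑ i, ‖(fderiv ℝ (f n) z).comp (slot i)‖ ≤ C ^ n :=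
        (le_add_of_nonneg_left (abs_nonneg _)).trans (hbound n z hz)
    _ ≤ |C| ^ n := (le_abs_self _).trans_eq (abs_pow C n)

lemma summable_setIntegral_mul_sum_divergence (θ : ℝ) {V : ℝ^d → ℝ^d} (hV : ContDiff ℝ 1 V) :
    Summable fun n => θ ^ n / n.factorial *
      ∫ z in unitBallWn d n, f n z * ∑ i, divergence V (z i) := by
  obtain ⟨K, hK⟩ := (isCompact_closedBall (0 : ℝ^d) 1).exists_bound_of_continuousOn
    (continuous_divergence hV).continuousOn
  have hK0 : 0 ≤ K := (norm_nonneg _).trans (hK 0 (Metric.mem_closedBall_self zero_le_one))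
  set κ := volume.real (unitBallW d)
  refine summable_pow_div_factorial_mul_of_abs_le θ (K := K) (ρ := 2 * |C| * κ) fun n => ?_
  have hdiv : ∀ z ∈ unitBallWn d n, |∑ i, divergence V (z i)| ≤ n * K := fun z hz =>
    (Finset.abs_sum_le_sum_abs _ _).trans ((Finset.sum_le_sum fun i _ =>
      (Real.norm_eq_abs _).symm.trans_le (hK _ (hz i trivial))).trans_eq (by simp))
  have hf : ∀ z ∈ unitBallWn d n, |f n z| ≤ |C| ^ n := fun z hz =>
    ((le_add_of_nonneg_right (by positivity)).trans (hbound n z hz)).trans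
      ((le_abs_self _).trans_eq (abs_pow C n))
  calc |∫ z in unitBallWn d n, f n z * ∑ i, divergence V (z i)|
      ≤ |C| ^ n * (n * K) * κ ^ n := abs_setIntegral_unitBallWn_le fun z hz => by
        rw [abs_mul]; exact mul_le_mul (hf z hz) (hdiv z hz) (abs_nonneg _) (by positivity)
    _ = K * n * (|C| * κ) ^ n := by ring
    _ ≤ K * 2 ^ n * (|C| * κ) ^ n := by gcongr; exact_mod_cast Nat.lt_two_pow_self.le
    _ = K * (2 * |C| * κ) ^ n := by ring

end FormFunctionBounds

theorem stmt0_general (d : ℕ) (θ : ℝ)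
    (f : (n : ℕ) → (Fin n → EuclideanSpace ℝ (Fin d)) → ℝ)
    (hsmooth : ∀ n, ContDiff ℝ 1 (f n))
    (hsym : ∀ (n : ℕ) (σ : Equiv.Perm (Fin n)) (z : Fin n → EuclideanSpace ℝ (Fin d)),
      f n (z ∘ σ) = f n z)
    (hcompat : ∀ (n : ℕ) (z : Fin n → EuclideanSpace ℝ (Fin d))
      (v : EuclideanSpace ℝ (Fin d)), ‖v‖ = 1 → f (n + 1) (Fin.snoc z v) = f n z)
    (C : ℝ)
    (hbound : ∀ (n : ℕ) (z : Fin n → EuclideanSpace ℝ (Fin d)), z ∈ unitBallWn d n →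
      |f n z| + ∑ i : Fin n, ‖(fderiv ℝ (f n) z).comp (slot i)‖ ≤ C ^ n)
    (V : EuclideanSpace ℝ (Fin d) → EuclideanSpace ℝ (Fin d)) (hV : ContDiff ℝ 1 V) :
    Summable (fun n : ℕ => θ ^ n / n.factorial *
      ∫ z in unitBallWn d n, ∑ i : Fin n, fderiv ℝ (f n) z (Pi.single i (V (z i))))
    ∧ Summable (fun n : ℕ => θ ^ n / n.factorial *
      ∫ z in unitBallWn d n, f n z *
        ((∑ i : Fin n, divergence V (z i)) - θ * ∫ u in unitBallW d, divergence V u))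
    ∧ -(∑' n : ℕ, θ ^ n / n.factorial *
        ∫ z in unitBallWn d n, ∑ i : Fin n, fderiv ℝ (f n) z (Pi.single i (V (z i))))
      = ∑' n : ℕ, θ ^ n / n.factorial *
        ∫ z in unitBallWn d n, f n z *
          ((∑ i : Fin n, divergence V (z i)) - θ * ∫ u in unitBallW d, divergence V u) := by
  set D := ∫ u in unitBallW d, divergence V u with hD
  have hA := summable_setIntegral_sum_fderiv hbound θ hV.continuous
  have hB := summable_setIntegral_mul_sum_divergence hbound θ hV
  have hF := summable_setIntegral hbound θ
  have hsplit : ∀ n, θ ^ n / n.factorial *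
      ∫ z in unitBallWn d n, f n z * ((∑ i, divergence V (z i)) - θ * D) =
      θ ^ n / n.factorial * (∫ z in unitBallWn d n, f n z * ∑ i, divergence V (z i)) -
        θ * D * (θ ^ n / n.factorial * ∫ z in unitBallWn d n, f n z) := fun n => by
    rw [setIntegral_mul_sum_divergence_sub (hsmooth n).continuous hV]
    ring
  have hsucc : ∀ k : ℕ, θ ^ (k + 1) / (k + 1).factorial *
      ((∫ z in unitBallWn d (k + 1), ∑ i, fderiv ℝ (f (k + 1)) z (Pi.single i (V (z i)))) +
        ∫ z in unitBallWn d (k + 1), f (k + 1) z * ∑ i, divergence V (z i)) =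
      θ * D * (θ ^ k / k.factorial * ∫ z in unitBallWn d k, f k z) := fun k => by
    rw [setIntegral_sum_fderiv_add_setIntegral_mul_sum_divergence (hsmooth _) (hsym _)
      (hcompat k) hV, Nat.factorial_succ, hD]
    push_cast
    field_simp
    ring
  simp only [hsplit]
  refine ⟨hA, hB.sub (hF.mul_left _), neg_tsum_eq_tsum_sub hA hB (by simp) fun k => ?_⟩
  rw [← mul_add, hsucc]

/-- Integration by parts (duality) formula `E[∫_W D_x F · V(x) dx] = E[F δ(V)]` expressed through
the form functions of a Poisson functional. -/
theorem stmt0 (d : ℕ) (hd : 1 ≤ d) (θ : ℝ) (hθ : 0 < θ)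
    (f : (n : ℕ) → (Fin n → EuclideanSpace ℝ (Fin d)) → ℝ)
    (hsmooth : ∀ n, ContDiff ℝ 1 (f n))
    (hsym : ∀ (n : ℕ) (σ : Equiv.Perm (Fin n)) (z : Fin n → EuclideanSpace ℝ (Fin d)),
      f n (z ∘ σ) = f n z)
    (hcompat : ∀ (n : ℕ) (z : Fin n → EuclideanSpace ℝ (Fin d))
      (v : EuclideanSpace ℝ (Fin d)), ‖v‖ = 1 → f (n + 1) (Fin.snoc z v) = f n z)
    (C : ℝ) (hC : 1 < C)
    (hbound : ∀ (n : ℕ) (z : Fin n → EuclideanSpace ℝ (Fin d)), z ∈ unitBallWn d n →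
      |f n z| + ∑ i : Fin n, ‖(fderiv ℝ (f n) z).comp (slot i)‖ ≤ C ^ n)
    (V : EuclideanSpace ℝ (Fin d) → EuclideanSpace ℝ (Fin d)) (hV : ContDiff ℝ 1 V) :
    Summable (fun n : ℕ => θ ^ n / n.factorial *
      ∫ z in unitBallWn d n, ∑ i : Fin n, fderiv ℝ (f n) z (Pi.single i (V (z i))))
    ∧ Summable (fun n : ℕ => θ ^ n / n.factorial *
      ∫ z in unitBallWn d n, f n z *
        ((∑ i : Fin n, divergence V (z i)) - θ * ∫ u in unitBallW d, divergence V u))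
    ∧ -(∑' n : ℕ, θ ^ n / n.factorial *
        ∫ z in unitBallWn d n, ∑ i : Fin n, fderiv ℝ (f n) z (Pi.single i (V (z i))))
      = ∑' n : ℕ, θ ^ n / n.factorial *
        ∫ z in unitBallWn d n, f n z *
          ((∑ i : Fin n, divergence V (z i)) - θ * ∫ u in unitBallW d, divergence V u) :=
  stmt0_general d θ f hsmooth hsym hcompat C hbound V hV
end
end

section
/- Let φ : [0,1] → ℝ be twice continuously differentiable with φ(t) > 0 for all t ∈ [0,1] and φ'(1) = 0, and define the gain function 𝒢(t) = −t (φ'(t) + t φ''(t)) / φ(t). If 𝒢(t) ≥ 0 for every t ∈ [0,1], then φ' vanishes identically on [0,1], and consequently 𝒢 ≡ 0 on [0,1]. In particular, there is no function φ satisfying these conditions for which 𝒢 is strictly positive at every point of (0,1]. -/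
/-!
Positivity of `φ` turns `𝒢 ≥ 0` into `(t φ'(t))' = φ'(t) + t φ''(t) ≤ 0` on `(0,1)`, so
`t ↦ t φ'(t)` is antitone on `[0,1]`. It vanishes at `t = 0` trivially and at `t = 1` because
`φ'(1) = 0`, hence it vanishes on all of `[0,1]`. Thus `φ' = 0` on `(0,1]`, and at `0` by
continuity; then `φ'' = 0` as well and `𝒢 ≡ 0`, so in particular `𝒢(1) = 0`.
-/

noncomputable section

/-- The gain function `𝒢(t) = −t (φ'(t) + t φ''(t)) / φ(t)` of the Stein estimator built from
`φ`, with the derivatives taken within `[0,1]`. -/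
def gainFun (φ : ℝ → ℝ) (t : ℝ) : ℝ :=
  -t * (derivWithin φ (Set.Icc 0 1) t +
      t * derivWithin (derivWithin φ (Set.Icc 0 1)) (Set.Icc 0 1) t) / φ t

open Set

theorem AntitoneOn.eq_left_of_left_eq_right {α β : Type*} [Preorder α] [PartialOrder β]
    {f : α → β} {a b : α} (hf : AntitoneOn f (Icc a b)) (hab : f a = f b) {x : α}
    (hx : x ∈ Icc a b) : f x = f a := by
  have ha : a ∈ Icc a b := left_mem_Icc.2 (hx.1.trans hx.2)
  have hb : b ∈ Icc a b := right_mem_Icc.2 (hx.1.trans hx.2)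
  exact le_antisymm (hf ha hx hx.1) (hab ▸ hf hx hb hx.2)

theorem eqOn_Icc_of_eqOn_Ioc {α β : Type*} [LinearOrder α] [TopologicalSpace α] [OrderTopology α]
    [DenselyOrdered α] [TopologicalSpace β] [T2Space β] {f g : α → β} {a b : α} (hab : a ≠ b)
    (hf : ContinuousOn f (Icc a b)) (hg : ContinuousOn g (Icc a b)) (h : EqOn f g (Ioc a b)) :
    EqOn f g (Icc a b) :=
  h.of_subset_closure hf hg Ioc_subset_Icc_self (closure_Ioc hab).superset

theorem mul_add_mul_derivWithin_nonpos_of_gainFun_nonneg {φ : ℝ → ℝ} {t : ℝ} (hpos : 0 < φ t)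
    (hG : 0 ≤ gainFun φ t) :
    t * (derivWithin φ (Icc 0 1) t + t * derivWithin (derivWithin φ (Icc 0 1)) (Icc 0 1) t)
      ≤ 0 := by
  rw [gainFun, le_div_iff₀ hpos] at hG
  linarith

theorem antitoneOn_mul_derivWithin_of_gainFun_nonneg {φ : ℝ → ℝ}
    (hφ : ContDiffOn ℝ 2 φ (Icc 0 1)) (hpos : ∀ t ∈ Icc (0 : ℝ) 1, 0 < φ t)
    (hG : ∀ t ∈ Icc (0 : ℝ) 1, 0 ≤ gainFun φ t) :
    AntitoneOn (fun t ↦ t * derivWithin φ (Icc 0 1) t) (Icc 0 1) := by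
  set φ' := derivWithin φ (Icc 0 1)
  have hφ' : ContDiffOn ℝ 1 φ' (Icc 0 1) := hφ.derivWithin (uniqueDiffOn_Icc one_pos) le_rfl
  refine antitoneOn_of_hasDerivWithinAt_nonpos (convex_Icc 0 1)
    (continuousOn_id.mul hφ'.continuousOn) (f' := fun t ↦ φ' t + t * derivWithin φ' (Icc 0 1) t)
    (fun t ht ↦ ?_) (fun t ht ↦ ?_)
  · rw [interior_Icc] at ht ⊢
    have hdiff := (hφ'.differentiableOn one_ne_zero t (Ioo_subset_Icc_self ht)).hasDerivWithinAt
    simpa only [one_mul] using ((hasDerivAt_id' t).hasDerivWithinAt.fun_mul hdiff).mono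
      Ioo_subset_Icc_self
  · rw [interior_Icc] at ht
    have ht' : t ∈ Icc (0 : ℝ) 1 := Ioo_subset_Icc_self ht
    exact nonpos_of_mul_nonpos_right
      (mul_add_mul_derivWithin_nonpos_of_gainFun_nonneg (hpos t ht') (hG t ht')) ht.1

theorem derivWithin_eqOn_zero_of_gainFun_nonneg {φ : ℝ → ℝ}
    (hφ : ContDiffOn ℝ 2 φ (Icc 0 1)) (hpos : ∀ t ∈ Icc (0 : ℝ) 1, 0 < φ t)
    (hd1 : derivWithin φ (Icc 0 1) 1 = 0) (hG : ∀ t ∈ Icc (0 : ℝ) 1, 0 ≤ gainFun φ t) :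
    EqOn (derivWithin φ (Icc 0 1)) 0 (Icc 0 1) := by
  have hanti := antitoneOn_mul_derivWithin_of_gainFun_nonneg hφ hpos hG
  have hends : 0 * derivWithin φ (Icc 0 1) 0 = 1 * derivWithin φ (Icc 0 1) 1 := by simp [hd1]
  refine eqOn_Icc_of_eqOn_Ioc zero_ne_one
    (hφ.derivWithin (m := 1) (uniqueDiffOn_Icc one_pos) le_rfl).continuousOn continuousOn_const
    fun t ht ↦ ?_
  have := hanti.eq_left_of_left_eq_right hends (Ioc_subset_Icc_self ht)
  simpa [ht.1.ne'] using this

theorem gainFun_eqOn_zero_of_derivWithin_eqOn_zero {φ : ℝ → ℝ}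
    (h : EqOn (derivWithin φ (Icc 0 1)) 0 (Icc 0 1)) : EqOn (gainFun φ) 0 (Icc 0 1) := by
  intro t ht
  simp [gainFun, h ht, derivWithin_congr h (h ht)]

/-- If `φ : [0,1] → ℝ` is `C²`, positive, satisfies `φ'(1) = 0` and its gain function `𝒢` is
nonnegative on `[0,1]`, then `φ'` vanishes identically on `[0,1]` and `𝒢 ≡ 0` on `[0,1]`; in
particular `𝒢` cannot be strictly positive at every point of `(0,1]`. -/
theorem stmt13 (φ : ℝ → ℝ) (hφ : ContDiffOn ℝ 2 φ (Set.Icc 0 1))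
    (hpos : ∀ t ∈ Set.Icc (0 : ℝ) 1, 0 < φ t)
    (hd1 : derivWithin φ (Set.Icc 0 1) 1 = 0)
    (hG : ∀ t ∈ Set.Icc (0 : ℝ) 1, 0 ≤ gainFun φ t) :
    (∀ t ∈ Set.Icc (0 : ℝ) 1, derivWithin φ (Set.Icc 0 1) t = 0 ∧ gainFun φ t = 0)
    ∧ ¬ ∀ t ∈ Set.Ioc (0 : ℝ) 1, 0 < gainFun φ t := by
  have hφ' := derivWithin_eqOn_zero_of_gainFun_nonneg hφ hpos hd1 hG
  have hgain := gainFun_eqOn_zero_of_derivWithin_eqOn_zero hφ'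
  refine ⟨fun t ht ↦ ⟨hφ' ht, hgain ht⟩, fun hpos_gain ↦ ?_⟩
  have h₁ := hpos_gain 1 (right_mem_Ioc.2 one_pos)
  rw [hgain (right_mem_Icc.2 zero_le_one)] at h₁
  exact lt_irrefl _ h₁
end
end
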